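/- arXiv:1403.1677 — 2 statements merged into one kernel-verified Lean document; each statement's English description precedes it below -/
import Mathlib

section
/- A closed subset P of a normed space Y is 0-paraconvex if and only if P is convex. (Here P is α-paraconvex, 0 ≤ α ≤ 1, if whenever p ∈ Y and r > 0 satisfy dist(p,P) < r, then dist(q,P) ≤ αr for every q in the convex hull of B_r(p) ∩ P, where B_r(p) is the open ball of radius r about p.) -/
def Paraconvex {Y : Type*} [NormedAddCommGroup Y] [NormedSpace ℝ Y] (α : ℝ) (P : Set Y) : Prop :=
  ∀ (p : Y) (r : ℝ), 0 < r → Metric.infDist p P < r →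
    ∀ q ∈ convexHull ℝ (Metric.ball p r ∩ P), Metric.infDist q P ≤ α * r

section

open Metric

variable {Y : Type*} [NormedAddCommGroup Y] [NormedSpace ℝ Y] {P : Set Y}

theorem Convex.paraconvex (hP : Convex ℝ P) {α : ℝ} (hα : 0 ≤ α) : Paraconvex α P := by
  intro p r hr _ q hq
  have hqP : q ∈ P := hP.convexHull_subset_iff.2 Set.inter_subset_right hq
  rw [infDist_zero_of_mem hqP]
  exact mul_nonneg hα hr.le

theorem Paraconvex.convex_of_isClosed (h : Paraconvex 0 P) (hcl : IsClosed P) :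
    Convex ℝ P := by
  intro x hx y hy a b ha hb hab
  set r := dist x y + 1
  have hr : 0 < r := by positivity
  have hpair : {x, y} ⊆ ball x r ∩ P := by
    rintro z (rfl | rfl)
    · exact ⟨mem_ball_self hr, hx⟩
    · exact ⟨by simp [r, dist_comm], hy⟩
  have hseg : a • x + b • y ∈ convexHull ℝ (ball x r ∩ P) :=
    convexHull_mono hpair (by rw [convexHull_pair]; exact ⟨a, b, ha, hb, hab, rfl⟩)
  have hdist := h x r hr (by rw [infDist_zero_of_mem hx]; exact hr) _ hseg
  rw [zero_mul] at hdist
  exact (hcl.mem_iff_infDist_zero ⟨x, hx⟩).2 (le_antisymm hdist infDist_nonneg)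

end

theorem stmt0_general {Y : Type*} [NormedAddCommGroup Y] [NormedSpace ℝ Y]
    (P : Set Y) (hcl : IsClosed P) :
    Paraconvex 0 P ↔ Convex ℝ P :=
  ⟨fun h => h.convex_of_isClosed hcl, fun h => h.paraconvex le_rfl⟩

theorem stmt0 {Y : Type*} [NormedAddCommGroup Y] [NormedSpace ℝ Y]
    (P : Set Y) (hne : P.Nonempty) (hcl : IsClosed P) :
    Paraconvex 0 P ↔ Convex ℝ P :=
  stmt0_general P hcl
end

section
/- Lower semi-continuity of the glued mapping in the Claim: let X, Y be topological spaces, A ⊆ X closed, U ⊆ X open with A ⊆ U, g : U → Y continuous, and ψ : X → 2^Y lower semi-continuous with nonempty values such that g(x) ∈ ψ(x) for all x ∈ A. Then the mapping ψ_g : X → 2^Y given by ψ_g(x) = {g(x)} for x ∈ A, ψ_g(x) = {g(x)} ∪ ψ(x) for x ∈ U \ A, and ψ_g(x) = ψ(x) for x ∈ X \ U, is lower semi-continuous. -/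
/-! The lower inverse `{x | ψ_g x ∩ V ≠ ∅}` of an open `V` is `g⁻¹(V)`, open in `U` and hence in `X`,
together with the lower inverse of `V` under `ψ` minus the closed set `A`. -/

open Set

section Glue

variable {X Y : Type*}

open Classical in
noncomputable def gluedMap {A U : Set X} (hAU : A ⊆ U) (g : U → Y) (ψ : X → Set Y) (x : X) :
    Set Y :=
  if h : x ∈ A then {g ⟨x, hAU h⟩}
  else if h : x ∈ U then insert (g ⟨x, h⟩) (ψ x)
  else ψ x

theorem gluedMap_inter_nonempty_iff {A U : Set X} (hAU : A ⊆ U) (g : U → Y) (ψ : X → Set Y)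
    (V : Set Y) (x : X) :
    (gluedMap hAU g ψ x ∩ V).Nonempty ↔
      x ∈ Subtype.val '' (g ⁻¹' V) ∨ ((ψ x ∩ V).Nonempty ∧ x ∉ A) := by
  unfold gluedMap
  by_cases hxA : x ∈ A
  · simp [hxA, hAU hxA]
  · by_cases hxU : x ∈ U
    · rw [dif_neg hxA, dif_pos hxU, insert_eq, union_inter_distrib_right, union_nonempty,
      singleton_inter_nonempty]
      simp [hxA, hxU]
    · simp [hxA, hxU]

theorem isOpen_setOf_gluedMap_inter_nonempty [TopologicalSpace X] [TopologicalSpace Y]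
    {A U : Set X} (hA : IsClosed A) (hU : IsOpen U) (hAU : A ⊆ U) {g : U → Y}
    (hg : Continuous g) {ψ : X → Set Y}
    (hψ : ∀ V : Set Y, IsOpen V → IsOpen {x | (ψ x ∩ V).Nonempty}) {V : Set Y} (hV : IsOpen V) :
    IsOpen {x | (gluedMap hAU g ψ x ∩ V).Nonempty} := by
  simp_rw [gluedMap_inter_nonempty_iff]
  exact (hU.isOpenMap_subtype_val _ (hV.preimage hg)).union ((hψ V hV).inter hA.isOpen_compl)

end Glue

open Classical in
theorem stmt15_general {X Y : Type*} [TopologicalSpace X] [TopologicalSpace Y]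
    (A U : Set X) (hA : IsClosed A) (hU : IsOpen U) (hAU : A ⊆ U)
    (g : U → Y) (hg : Continuous g)
    (ψ : X → Set Y)
    (hψ : ∀ V : Set Y, IsOpen V → IsOpen {x | (ψ x ∩ V).Nonempty}) :
    ∀ V : Set Y, IsOpen V → IsOpen {x |
      ((if h : x ∈ A then ({g ⟨x, hAU h⟩} : Set Y)
        else if h : x ∈ U then insert (g ⟨x, h⟩) (ψ x)
        else ψ x) ∩ V).Nonempty} :=
  fun _ hV => isOpen_setOf_gluedMap_inter_nonempty hA hU hAU hg hψ hV

open Classical in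
theorem stmt15 {X Y : Type*} [TopologicalSpace X] [TopologicalSpace Y]
    (A U : Set X) (hA : IsClosed A) (hU : IsOpen U) (hAU : A ⊆ U)
    (g : U → Y) (hg : Continuous g)
    (ψ : X → Set Y) (hne : ∀ x, (ψ x).Nonempty)
    (hψ : ∀ V : Set Y, IsOpen V → IsOpen {x | (ψ x ∩ V).Nonempty})
    (hsel : ∀ x (hx : x ∈ A), g ⟨x, hAU hx⟩ ∈ ψ x) :
    ∀ V : Set Y, IsOpen V → IsOpen {x |
      ((if h : x ∈ A then ({g ⟨x, hAU h⟩} : Set Y)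
        else if h : x ∈ U then insert (g ⟨x, h⟩) (ψ x)
        else ψ x) ∩ V).Nonempty} :=
  stmt15_general A U hA hU hAU g hg ψ hψ
end
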